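/- Let ω ⊆ ℝ² be open, 𝒴 the two-dimensional torus ℝ²/ℤ² with quotient map π : ℝ² → 𝒴, ε_n → 0⁺, and D ⊆ 𝒴. For ε > 0 set D_ε := { x ∈ ℝ² : π(x/ε) ∈ D }. Let (μ_n) be finite positive Borel measures on ω with μ_n(ω \ D_{ε_n}) = 0 for every n, and suppose μ_n two-scale converges weakly* to a finite positive Borel measure μ on ω × 𝒴, i.e. ∫_ω χ(x, π(x/ε_n)) dμ_n(x) → ∫_{ω×𝒴} χ dμ for every continuous χ : ω × 𝒴 → ℝ vanishing at infinity. Then μ( { (x,y) ∈ ω × 𝒴 : y ∉ closure(D) } ) = 0; equivalently, the support of μ is contained in ω̄ × closure(D). -/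
import Mathlib


open MeasureTheory Filter Topology Set
open scoped ENNReal NNReal

/-- The two-dimensional torus `ℝ²/ℤ²`. -/
abbrev Torus2 : Type := AddCircle (1 : ℝ) × AddCircle (1 : ℝ)

/-- The canonical quotient map `π : ℝ² → ℝ²/ℤ²`. -/
noncomputable def torusProj (x : ℝ × ℝ) : Torus2 :=
  ((x.1 : AddCircle (1 : ℝ)), (x.2 : AddCircle (1 : ℝ)))

set_option maxHeartbeats 1000000 in
set_option synthInstance.maxHeartbeats 200000 in
/-- Localization of two-scale weak* limits: if each `μ_n` is
concentrated on `ω ∩ D_{ε_n}` (where `D_ε = {x : π(x/ε) ∈ D}`) and `μ_n` two-scale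
converges weakly* to `μ₀`, then `μ₀` is concentrated on `ω × closure D`, i.e. the set
where the fast variable lies outside `closure D` is `μ₀`-null. -/
theorem twoscale_weakstar_limit_support
    (ω : Set (ℝ × ℝ)) (hω : IsOpen ω)
    (ε : ℕ → ℝ) (hε : ∀ n, 0 < ε n) (hε0 : Tendsto ε atTop (𝓝 0))
    (D : Set Torus2)
    (μ : ℕ → Measure ↥ω) (hfin : ∀ n, IsFiniteMeasure (μ n))
    (hsupp : ∀ n, μ n {x : ↥ω | torusProj ((ε n)⁻¹ • (x : ℝ × ℝ)) ∉ D} = 0)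
    (μ₀ : Measure (↥ω × Torus2)) (hfin₀ : IsFiniteMeasure μ₀)
    (h2s : ∀ χ : ↥ω × Torus2 → ℝ, Continuous χ →
      Tendsto χ (Filter.cocompact (↥ω × Torus2)) (𝓝 0) →
      Tendsto (fun n => ∫ x, χ (x, torusProj ((ε n)⁻¹ • (x : ℝ × ℝ))) ∂(μ n))
        atTop (𝓝 (∫ p, χ p ∂μ₀))) :
    μ₀ {p : ↥ω × Torus2 | p.2 ∉ closure D} = 0 := by
  haveI : LocallyCompactSpace ↥ω := hω.locallyCompactSpace
  haveI : T2Space (↥ω × Torus2) := inferInstance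
  haveI : LocallyCompactSpace (↥ω × Torus2) := inferInstance
  haveI := hfin₀
  set S : Set (↥ω × Torus2) := {p : ↥ω × Torus2 | p.2 ∉ closure D} with hS
  have hSopen : IsOpen S := (isClosed_closure.preimage continuous_snd).isOpen_compl
  -- key: every compact subset of S is μ₀-null
  have hK : ∀ K : Set (↥ω × Torus2), IsCompact K → K ⊆ S → μ₀ K = 0 := by
    intro K hKc hKS
    obtain ⟨f, hf1, hf0, hfc, hfb⟩ :=
      exists_continuous_one_zero_of_isCompact hKc hSopen.isClosed_compl
        (disjoint_compl_right_iff_subset.mpr hKS)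
    -- the two-scale integrals vanish
    have hzero : ∀ n, (∫ x, f (x, torusProj ((ε n)⁻¹ • (x : ℝ × ℝ))) ∂(μ n)) = 0 := by
      intro n
      refine integral_eq_zero_of_ae ?_
      have hae : ∀ᵐ (x : ↥ω) ∂(μ n), torusProj ((ε n)⁻¹ • (x : ℝ × ℝ)) ∈ D := by
        rw [ae_iff]
        exact hsupp n
      filter_upwards [hae] with x hx
      apply hf0
      simp only [mem_compl_iff, hS, mem_setOf_eq, not_not]
      exact subset_closure hx
    -- f tends to zero at cocompact
    have hcoc : Tendsto (⇑f) (cocompact (↥ω × Torus2)) (𝓝 0) := hfc.is_zero_at_infty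
    have hlim := h2s f f.continuous hcoc
    simp only [hzero] at hlim
    have hint : (∫ p, f p ∂μ₀) = 0 := (tendsto_nhds_unique tendsto_const_nhds hlim).symm
    -- μ₀ K ≤ ∫ f = 0
    have hint_f : Integrable (⇑f) μ₀ := f.continuous.integrable_of_hasCompactSupport hfc
    have hle : (μ₀ K).toReal ≤ ∫ p, f p ∂μ₀ := by
      have h1 : ∫ p, Set.indicator K (fun _ => (1:ℝ)) p ∂μ₀ ≤ ∫ p, f p ∂μ₀ := by
        refine integral_mono_of_nonneg ?_ hint_f ?_
        · filter_upwards with p; exact Set.indicator_nonneg (fun _ _ => zero_le_one) p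
        · filter_upwards with p
          by_cases hp : p ∈ K
          · simp [hp, hf1 hp]
          · simpa [hp] using (hfb p).1
      rwa [integral_indicator_const _ (hKc.isClosed.measurableSet), smul_eq_mul, mul_one] at h1
    rw [hint] at hle
    have h0 : (μ₀ K).toReal = 0 := le_antisymm hle ENNReal.toReal_nonneg
    simpa [ENNReal.toReal_eq_zero_iff, (measure_lt_top μ₀ K).ne] using h0
  -- inner regularity
  rw [hSopen.measure_eq_iSup_isCompact]
  simp only [ENNReal.iSup_eq_zero]
  intro K hKS hKc
  exact hK K hKc hKS
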